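/- γ is natural on V-categories: for every function f : X → Y and every V-category d_Y on Y, {q ∘ f | q ∈ γ_Y(d_Y)} = γ_X(d_Y ∘ (f × f)). -/

import Mathlib

/-!
A predicate `p ∈ γ_X(d_Y ∘ (f × f))` extends along `f` to the McShane–Whitney predicate
`q y = ⨆ x, d_Y (f x) y ⊗ p x`: transitivity of `d_Y` makes `q` non-expansive, reflexivity gives
`p ≤ q ∘ f`, and non-expansiveness of `p` gives `q ∘ f ≤ p`. The other inclusion holds for any
`V`-graph, since restricting along `f` preserves non-expansiveness.
-/

variable {V : Type*}

/-- Residuation (internal hom) of a quantale. -/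
def dres [CommMonoid V] [CompleteLattice V] (a c : V) : V := sSup {u | u * a ≤ c}

/-- The set of predicates non-expansive w.r.t. a \`V\`-graph \`d\`. -/
def gammaMap {X : Type*} [CommMonoid V] [CompleteLattice V] (d : X → X → V) : Set (X → V) :=
  {f | ∀ x₁ x₂, d x₁ x₂ ≤ dres (f x₁) (f x₂)}

section Quantale

variable [CommMonoid V] [CompleteLattice V] {X Y : Type*}

lemma le_dres_iff [IsQuantale V] {u a c : V} : u ≤ dres a c ↔ u * a ≤ c :=
  Quantale.leftMulResiduation_le_iff_mul_le

lemma comp_mem_gammaMap {d : Y → Y → V} {q : Y → V} (hq : q ∈ gammaMap d) (f : X → Y) :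
    q ∘ f ∈ gammaMap (fun x₁ x₂ => d (f x₁) (f x₂)) :=
  fun x₁ x₂ => hq (f x₁) (f x₂)

def mcShaneWhitney (d : Y → Y → V) (f : X → Y) (p : X → V) (y : Y) : V :=
  ⨆ x, d (f x) y * p x

variable [IsQuantale V] {d : Y → Y → V}

lemma mcShaneWhitney_mem_gammaMap (htrans : ∀ x y z, d x y * d y z ≤ d x z)
    (f : X → Y) (p : X → V) : mcShaneWhitney d f p ∈ gammaMap d := by
  intro y₁ y₂
  rw [le_dres_iff, mcShaneWhitney, Quantale.mul_iSup_distrib]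
  refine iSup_le fun x => le_iSup_of_le x ?_
  calc d y₁ y₂ * (d (f x) y₁ * p x) = d (f x) y₁ * d y₁ y₂ * p x := by ac_rfl
    _ ≤ d (f x) y₂ * p x := mul_le_mul_left (htrans (f x) y₁ y₂) _

lemma mcShaneWhitney_comp (hrefl : ∀ y, (1 : V) ≤ d y y) {f : X → Y} {p : X → V}
    (hp : p ∈ gammaMap (fun x₁ x₂ => d (f x₁) (f x₂))) : mcShaneWhitney d f p ∘ f = p := by
  funext x
  apply le_antisymm
  · exact iSup_le fun x' => le_dres_iff.mp (hp x' x)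
  · refine le_iSup_of_le x ?_
    calc p x = 1 * p x := (one_mul _).symm
      _ ≤ d (f x) (f x) * p x := mul_le_mul_left (hrefl (f x)) _

end Quantale

/-- Naturality of γ on V-categories. -/
theorem stmt17 [CommMonoid V] [CompleteLattice V] [IsQuantale V]
    {X Y : Type*} (f : X → Y) (dY : Y → Y → V)
    (hrefl : ∀ y, (1 : V) ≤ dY y y)
    (htrans : ∀ x y z, dY x y * dY y z ≤ dY x z) :
    (fun q : Y → V => q ∘ f) '' gammaMap dY =
      gammaMap (fun x₁ x₂ => dY (f x₁) (f x₂)) := by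
  ext p
  constructor
  · rintro ⟨q, hq, rfl⟩
    exact comp_mem_gammaMap hq f
  · intro hp
    exact ⟨mcShaneWhitney dY f p, mcShaneWhitney_mem_gammaMap htrans f p,
      mcShaneWhitney_comp hrefl hp⟩
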